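/- arXiv:2305.12813 — 2 statements merged into one kernel-verified Lean document; each statement's English description precedes it below -/
import Mathlib

section
/- Let M > 0, ε > 0, x_1,…,x_N ∈ ℝ^n, f_1,…,f_N ∈ ℝ^n, let V ⊆ ℝ^n be a finite set, and let g̃_1,…,g̃_N ∈ ℝ^n be such that for every v ∈ V: Σ_{i=1}^N (⟨g̃_i, f_i⟩ + M·‖g̃_i‖·‖v − x_i‖) ≤ −ε. Then every x ∈ conv(V) satisfies: there exists i ∈ {1,…,N} with ‖x − x_i‖ < ‖f_i‖/M. Equivalently, conv(V) ⊆ ∪_{i=1}^N B(x_i, r_i), where r_i := ‖f_i‖/M and B(x_i, r_i) is the open Euclidean ball of center x_i and radius r_i. -/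
/-!
The function `Φ y = ∑ i, (⟪g̃ i, f i⟫ + M ‖g̃ i‖ ‖y - x i‖)` is convex, so by the maximum principle
it is at most `-ε < 0` on all of `conv V`. At a point `y` outside every ball `B(x i, ‖f i‖ / M)`
each summand is nonnegative by Cauchy–Schwarz, since `‖f i‖ ≤ M ‖y - x i‖`, so `Φ y ≥ 0`.
-/

open Set

lemma ConvexOn.finset_sum {ι 𝕜 E β : Type*} [Semiring 𝕜] [PartialOrder 𝕜] [AddCommMonoid E]
    [AddCommMonoid β] [PartialOrder β] [IsOrderedAddMonoid β] [SMul 𝕜 E] [Module 𝕜 β]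
    {s : Set E} (hs : Convex 𝕜 s) (t : Finset ι) {f : ι → E → β}
    (hf : ∀ i ∈ t, ConvexOn 𝕜 s (f i)) :
    ConvexOn 𝕜 s fun x => ∑ i ∈ t, f i x := by
  simpa only [← Finset.sum_apply] using
    Finset.sum_induction f (ConvexOn 𝕜 s) (fun _ _ => ConvexOn.add) (convexOn_const (0 : β) hs) hf

lemma convexOn_univ_sum_const_add_mul_norm_sub {ι E : Type*} [NormedAddCommGroup E]
    [NormedSpace ℝ E] (t : Finset ι) (c a : ι → ℝ) (ha : ∀ i ∈ t, 0 ≤ a i) (z : ι → E) :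
    ConvexOn ℝ univ fun y => ∑ i ∈ t, (c i + a i * ‖y - z i‖) :=
  ConvexOn.finset_sum convex_univ t fun i hi =>
    (convexOn_const (c i) convex_univ).add <| by
      simpa only [dist_eq_norm, smul_eq_mul] using (convexOn_univ_dist (z i)).smul (ha i hi)

lemma inner_add_mul_norm_mul_nonneg_of_norm_le {E : Type*} [NormedAddCommGroup E]
    [InnerProductSpace ℝ E] {g f : E} {M r : ℝ} (h : ‖f‖ ≤ M * r) :
    0 ≤ inner ℝ g f + M * ‖g‖ * r := by
  have hcs : -inner ℝ g f ≤ ‖g‖ * ‖f‖ := (neg_le_abs _).trans (abs_real_inner_le_norm g f)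
  nlinarith [mul_le_mul_of_nonneg_left h (norm_nonneg g)]

/-- covering necessary condition, Lemma 1. -/
theorem covering_necessary_condition {n N : ℕ}
    (M ε : ℝ) (hM : 0 < M) (hε : 0 < ε)
    (xd fd : Fin N → EuclideanSpace ℝ (Fin n))
    (V : Finset (EuclideanSpace ℝ (Fin n)))
    (gtil : Fin N → EuclideanSpace ℝ (Fin n))
    (hneg : ∀ v ∈ V, ∑ i, ((inner ℝ (gtil i) (fd i) : ℝ) + M * ‖gtil i‖ * ‖v - xd i‖) ≤ -ε) :
    ∀ x ∈ convexHull ℝ (V : Set (EuclideanSpace ℝ (Fin n))),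
      ∃ i : Fin N, ‖x - xd i‖ < ‖fd i‖ / M := by
  intro x hx
  by_contra! hfar
  obtain ⟨v, hv, hxv⟩ := (convexOn_univ_sum_const_add_mul_norm_sub Finset.univ
    (fun i => inner ℝ (gtil i) (fd i)) (fun i => M * ‖gtil i‖)
    (fun i _ => by positivity) xd).exists_ge_of_mem_convexHull (subset_univ _) hx
  have hx_nonneg : 0 ≤ ∑ i, (inner ℝ (gtil i) (fd i) + M * ‖gtil i‖ * ‖x - xd i‖) :=
    Finset.sum_nonneg fun i _ =>
      inner_add_mul_norm_mul_nonneg_of_norm_le ((div_le_iff₀' hM).mp (hfar i))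
  linarith [hneg v hv]
end

section
/- Let f : ℝ² → ℝ² be the counterexample vector field, and let x : ℝ → ℝ² satisfy ‖x(0)‖ < 1/4 and, for every t ≥ 0, x is differentiable at t with derivative f(x(t)). Then for every t ≥ 0, ‖x(t)‖ = ‖x(0)‖·e^{−t}. -/
/-- The vector `(a, b)` in Euclidean `ℝ²`. -/
noncomputable def vec2 (a b : ℝ) : EuclideanSpace ℝ (Fin 2) :=
  (WithLp.equiv 2 (Fin 2 → ℝ)).symm ![a, b]

/-- The radial speed of the counterexample vector field. -/
noncomputable def radialSpeed (x : EuclideanSpace ℝ (Fin 2)) : ℝ :=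
  if 3/4 ≤ ‖x‖ then 1/‖x‖ - 1
  else if 1/4 ≤ ‖x‖ then 1 - 1/(2*‖x‖)
  else -1

/-- The counterexample vector field
`f(x) = ‖x‖·‖x − (1,0)‖²·(−x₂, x₁) + v_r(x)·x`. -/
noncomputable def counterF (x : EuclideanSpace ℝ (Fin 2)) : EuclideanSpace ℝ (Fin 2) :=
  (‖x‖ * ‖x - vec2 1 0‖^2) • vec2 (-(x 1)) (x 0) + radialSpeed x • x

/-!
The rotational part of `counterF` is orthogonal to `x`, so along a trajectory
`d/dt ‖x‖² = 2 v_r(x) ‖x‖²`, which is `-2 ‖x‖²` on the ball of radius `1/4`. The field therefore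
points strictly inwards there, the trajectory never leaves that ball, and `‖x‖²` solves
`u' = -2u`, i.e. `‖x t‖² = ‖x 0‖² e^{-2t}`.
-/

open Real
open scoped RealInnerProductSpace

theorem eq_mul_exp_of_hasDerivAt_eq_mul {u : ℝ → ℝ} {k : ℝ}
    (hu : ∀ t, 0 ≤ t → HasDerivAt u (k * u t) t) {t : ℝ} (ht : 0 ≤ t) :
    u t = u 0 * exp (k * t) := by
  set g : ℝ → ℝ := fun s => u s * exp (-(k * s))
  have hg : ∀ s, 0 ≤ s → HasDerivAt g 0 s := by
    intro s hs
    have he : HasDerivAt (fun s => exp (-(k * s))) (exp (-(k * s)) * -k) s :=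
      ((hasDerivAt_id s).const_mul k).neg.exp.congr_deriv (by simp)
    exact ((hu s hs).mul he).congr_deriv (by ring)
  have hconst := constant_of_has_deriv_right_zero (f := g)
    (fun s hs => (hg s hs.1).continuousAt.continuousWithinAt)
    (fun s hs => (hg s hs.1).hasDerivWithinAt) t ⟨ht, le_rfl⟩
  simp only [g, mul_zero, neg_zero, exp_zero, mul_one] at hconst
  rw [← hconst, mul_assoc, ← exp_add, neg_add_cancel, exp_zero, mul_one]

section Trajectory

variable {E : Type*} [NormedAddCommGroup E] [InnerProductSpace ℝ E] {F : E → E}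
  {x : ℝ → E} {r : ℝ}

theorem norm_lt_of_hasDerivAt_of_inner_neg (hF : ∀ y, 0 < ‖y‖ → ‖y‖ < r → ⟪y, F y⟫ < 0)
    (hx : ∀ t, 0 ≤ t → HasDerivAt x (F (x t)) t) (h0 : ‖x 0‖ < r) {t : ℝ} (ht : 0 ≤ t) :
    ‖x t‖ < r := by
  have hr : 0 ≤ r := (norm_nonneg _).trans h0.le
  obtain ⟨c, h0c, hcr⟩ := exists_between (pow_lt_pow_left₀ h0 (norm_nonneg _) two_ne_zero)
  -- `‖x ·‖²` cannot cross the level `c` upwards: at a crossing its derivative `2⟪x, F x⟫` is negative.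
  have hle : ‖x t‖ ^ 2 ≤ c := by
    refine image_le_of_deriv_right_lt_deriv_boundary (f := (‖x ·‖ ^ 2)) (B' := fun _ => 0)
      (fun s hs => (hx s hs.1).norm_sq.continuousAt.continuousWithinAt)
      (fun s hs => (hx s hs.1).norm_sq.hasDerivWithinAt) ?_ (fun _ => hasDerivAt_const _ c)
      ?_ ⟨ht, le_rfl⟩
    · exact h0c.le
    · intro s _ hs
      have hpos : 0 < ‖x s‖ := by nlinarith [norm_nonneg (x s)]
      have hlt : ‖x s‖ < r := lt_of_pow_lt_pow_left₀ 2 hr (hs ▸ hcr)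
      linarith [hF _ hpos hlt]
  exact lt_of_pow_lt_pow_left₀ 2 hr (hle.trans_lt hcr)

end Trajectory

theorem inner_vec2_rotate (y : EuclideanSpace ℝ (Fin 2)) : ⟪y, vec2 (-(y 1)) (y 0)⟫ = 0 := by
  simp [vec2, PiLp.inner_apply, Fin.sum_univ_two]
  ring

theorem inner_counterF (y : EuclideanSpace ℝ (Fin 2)) :
    ⟪y, counterF y⟫ = radialSpeed y * ‖y‖ ^ 2 := by
  rw [counterF, inner_add_right, real_inner_smul_right, real_inner_smul_right, inner_vec2_rotate,
    real_inner_self_eq_norm_sq, mul_zero, zero_add]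

theorem radialSpeed_of_norm_lt {y : EuclideanSpace ℝ (Fin 2)} (hy : ‖y‖ < 1 / 4) :
    radialSpeed y = -1 := by
  rw [radialSpeed, if_neg (by linarith), if_neg (by linarith)]

theorem inner_counterF_of_norm_lt {y : EuclideanSpace ℝ (Fin 2)} (hy : ‖y‖ < 1 / 4) :
    ⟪y, counterF y⟫ = -‖y‖ ^ 2 := by
  rw [inner_counterF, radialSpeed_of_norm_lt hy, neg_one_mul]

/-- radial behaviour of trajectories starting with `‖x(0)‖ < 1/4`. -/
theorem counterexample_radial_inner
    (x : ℝ → EuclideanSpace ℝ (Fin 2))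
    (h0 : ‖x 0‖ < 1/4)
    (hx : ∀ t : ℝ, 0 ≤ t → HasDerivAt x (counterF (x t)) t) :
    ∀ t : ℝ, 0 ≤ t → ‖x t‖ = ‖x 0‖ * Real.exp (-t) := by
  have hsmall : ∀ t, 0 ≤ t → ‖x t‖ < 1 / 4 := fun t ht =>
    norm_lt_of_hasDerivAt_of_inner_neg
      (fun y hy hy' => by rw [inner_counterF_of_norm_lt hy']; exact neg_neg_of_pos (pow_pos hy 2))
      hx h0 ht
  have hsq : ∀ t, 0 ≤ t → HasDerivAt (‖x ·‖ ^ 2) (-2 * ‖x t‖ ^ 2) t := fun t ht =>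
    ((hx t ht).norm_sq).congr_deriv (by rw [inner_counterF_of_norm_lt (hsmall t ht)]; ring)
  intro t ht
  have hexp : ‖x t‖ ^ 2 = (‖x 0‖ * exp (-t)) ^ 2 := by
    rw [eq_mul_exp_of_hasDerivAt_eq_mul hsq ht, mul_pow, ← exp_nat_mul]
    ring_nf
  exact (pow_left_inj₀ (norm_nonneg _) (by positivity) two_ne_zero).mp hexp
end
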